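/- Let λ ∈ ℂ and let u ∈ C^∞[0,1] solve −(1−ρ²)u''(ρ) − (2(1−ρ²)/ρ)u'(ρ) + 2λρu'(ρ) + (V(ρ)/ρ²)u(ρ) + λ(λ+1)u(ρ) = 0 on (0,1), where V(ρ) = 2(1−6ρ²+ρ⁴)/(1+ρ²)². Define ũ(ρ) := (1−ρ²)^{λ/2} u(ρ) on (0,1). Then ũ satisfies −(1−ρ²)² ũ''(ρ) − (2(1−ρ²)²/ρ) ũ'(ρ) + (((1−ρ²)V(ρ) − ρ²)/ρ²) ũ(ρ) = −(1−λ)² ũ(ρ) for all ρ ∈ (0,1). -/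

import Mathlib

/-!
The weight `g(ρ) = (1 - ρ²)^{λ/2}` has logarithmic derivative `a = -λρ/(1 - ρ²)`, so
`(g u)' = g (a u + u')` and `(g u)'' = g ((a' + a²) u + 2 a u' + u'')`. Substituting these into the
left-hand side, the factor `g` comes out and what remains is `(1 - ρ²)` times the equation `(E_λ)`.
-/

/-- The potential `V(ρ) = 2(1−6ρ²+ρ⁴)/(1+ρ²)²`. -/
noncomputable def Vpot (ρ : ℝ) : ℝ := 2 * (1 - 6 * ρ ^ 2 + ρ ^ 4) / (1 + ρ ^ 2) ^ 2

open Filter Topology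

section Conjugation

variable {𝕜 𝔸 : Type*} [NontriviallyNormedField 𝕜] [NormedCommRing 𝔸] [NormedAlgebra 𝕜 𝔸]
  {g f a : 𝕜 → 𝔸} {x : 𝕜}

theorem HasDerivAt.mul_of_hasDerivAt_eq_mul {f' : 𝔸} (hg : HasDerivAt g (a x * g x) x)
    (hf : HasDerivAt f f' x) :
    HasDerivAt (fun y => g y * f y) (g x * (a x * f x + f')) x :=
  (hg.mul hf).congr_deriv (by ring)

theorem hasDerivAt_deriv_mul_of_hasDerivAt_eq_mul {a' : 𝔸}
    (hg : ∀ᶠ y in 𝓝 x, HasDerivAt g (a y * g y) y) (ha : HasDerivAt a a' x)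
    (hf : ∀ᶠ y in 𝓝 x, DifferentiableAt 𝕜 f y) (hf' : DifferentiableAt 𝕜 (deriv f) x) :
    HasDerivAt (deriv fun y => g y * f y)
      (g x * ((a' + a x ^ 2) * f x + 2 * a x * deriv f x + deriv (deriv f) x)) x := by
  have hderiv : (deriv fun y => g y * f y) =ᶠ[𝓝 x] fun y => g y * (a y * f y + deriv f y) := by
    filter_upwards [hg, hf] with y hgy hfy
    exact (hgy.mul_of_hasDerivAt_eq_mul hfy.hasDerivAt).deriv
  have hinner : HasDerivAt (fun y => a y * f y + deriv f y)
      (a' * f x + a x * deriv f x + deriv (deriv f) x) x :=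
    (ha.mul hf.self_of_nhds.hasDerivAt).add hf'.hasDerivAt
  exact ((hg.self_of_nhds.mul_of_hasDerivAt_eq_mul hinner).congr_of_eventuallyEq
    hderiv).congr_deriv (by ring)

end Conjugation

theorem one_sub_sq_mem_slitPlane {x : ℝ} (hx : x ^ 2 < 1) :
    1 - (x : ℂ) ^ 2 ∈ Complex.slitPlane := by
  rw [Complex.mem_slitPlane_iff]
  left
  norm_cast
  linarith

theorem hasDerivAt_one_sub_sq_cpow (c : ℂ) {x : ℝ} (hx : x ^ 2 < 1) :
    HasDerivAt (fun y : ℝ => (1 - (y : ℂ) ^ 2) ^ c)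
      (-(2 * c * x / (1 - (x : ℂ) ^ 2)) * (1 - (x : ℂ) ^ 2) ^ c) x := by
  have hne : 1 - (x : ℂ) ^ 2 ≠ 0 := Complex.slitPlane_ne_zero (one_sub_sq_mem_slitPlane hx)
  have hbase : HasDerivAt (fun z : ℂ => 1 - z ^ 2) (-(2 * (x : ℂ))) (x : ℂ) := by
    simpa using ((hasDerivAt_pow 2 (x : ℂ)).const_sub 1)
  refine ((hbase.cpow_const (one_sub_sq_mem_slitPlane hx)).comp_ofReal).congr_deriv ?_
  rw [Complex.cpow_sub _ _ hne, Complex.cpow_one]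
  field_simp

theorem hasDerivAt_neg_two_mul_div_one_sub_sq (c : ℂ) {x : ℝ} (hx : x ^ 2 < 1) :
    HasDerivAt (fun y : ℝ => -(2 * c * y / (1 - (y : ℂ) ^ 2)))
      (-(2 * c * (1 + (x : ℂ) ^ 2) / (1 - (x : ℂ) ^ 2) ^ 2)) x := by
  have hne : 1 - (x : ℂ) ^ 2 ≠ 0 := Complex.slitPlane_ne_zero (one_sub_sq_mem_slitPlane hx)
  have hnum : HasDerivAt (fun z : ℂ => 2 * c * z) (2 * c) (x : ℂ) := by
    simpa using (hasDerivAt_id (x : ℂ)).const_mul (2 * c)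
  have hden : HasDerivAt (fun z : ℂ => 1 - z ^ 2) (-(2 * (x : ℂ))) (x : ℂ) := by
    simpa using ((hasDerivAt_pow 2 (x : ℂ)).const_sub 1)
  refine ((hnum.div hden hne).neg.comp_ofReal).congr_deriv ?_
  field_simp
  ring

/-- With `ũ = G u`, `ũ' = G (a u + u')` and `ũ'' = G ((a' + a²) u + 2 a u' + u'')`, the claimed
equation for `ũ` is `(1 - r²) G` times the mode equation for `u`. -/
theorem conjugated_mode_equation {lam r V U₀ U₁ U₂ a a' : ℂ} (G : ℂ) (hr : r ≠ 0)
    (hs : 1 - r ^ 2 ≠ 0)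
    (hode : -(1 - r ^ 2) * U₂ - 2 * (1 - r ^ 2) / r * U₁ + 2 * lam * r * U₁
      + V / r ^ 2 * U₀ + lam * (lam + 1) * U₀ = 0)
    (ha : a = -(2 * (lam / 2) * r / (1 - r ^ 2)))
    (ha' : a' = -(2 * (lam / 2) * (1 + r ^ 2) / (1 - r ^ 2) ^ 2)) :
    -(1 - r ^ 2) ^ 2 * (G * ((a' + a ^ 2) * U₀ + 2 * a * U₁ + U₂))
      - 2 * (1 - r ^ 2) ^ 2 / r * (G * (a * U₀ + U₁))
      + ((1 - r ^ 2) * V - r ^ 2) / r ^ 2 * (G * U₀)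
      = -(1 - lam) ^ 2 * (G * U₀) := by
  subst ha ha'
  field_simp at hode ⊢
  linear_combination (1 - r ^ 2) * G * hode

/-- if `u ∈ C^∞[0,1]` solves the eigenvalue equation `(E_λ)` on `(0,1)`,
then `ũ(ρ) := (1−ρ²)^{λ/2} u(ρ)` (principal branch of the complex power) satisfies
`−(1−ρ²)² ũ'' − (2(1−ρ²)²/ρ) ũ' + (((1−ρ²)V(ρ) − ρ²)/ρ²) ũ = −(1−λ)² ũ` on `(0,1)`. -/
theorem stmt_17 (lam : ℂ) (u : ℝ → ℂ)
    (hu : ContDiffOn ℝ (⊤ : ℕ∞) u (Set.Icc 0 1))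
    (hode : ∀ ρ ∈ Set.Ioo (0:ℝ) 1,
      -(1 - (ρ:ℂ) ^ 2) * deriv (deriv u) ρ
      - (2 * (1 - (ρ:ℂ) ^ 2) / (ρ:ℂ)) * deriv u ρ
      + 2 * lam * (ρ:ℂ) * deriv u ρ
      + (((Vpot ρ : ℝ) : ℂ) / (ρ:ℂ) ^ 2) * u ρ
      + lam * (lam + 1) * u ρ = 0) :
    ∀ ρ ∈ Set.Ioo (0:ℝ) 1,
      -(1 - (ρ:ℂ) ^ 2) ^ 2
          * deriv (deriv (fun x : ℝ => (1 - (x:ℂ) ^ 2) ^ (lam / 2) * u x)) ρ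
      - (2 * (1 - (ρ:ℂ) ^ 2) ^ 2 / (ρ:ℂ))
          * deriv (fun x : ℝ => (1 - (x:ℂ) ^ 2) ^ (lam / 2) * u x) ρ
      + (((1 - (ρ:ℂ) ^ 2) * ((Vpot ρ : ℝ) : ℂ) - (ρ:ℂ) ^ 2) / (ρ:ℂ) ^ 2)
          * ((1 - (ρ:ℂ) ^ 2) ^ (lam / 2) * u ρ)
      = -(1 - lam) ^ 2 * ((1 - (ρ:ℂ) ^ 2) ^ (lam / 2) * u ρ) := by
  intro ρ hρ
  have hsq : ∀ y ∈ Set.Ioo (0:ℝ) 1, y ^ 2 < 1 := fun y hy => by nlinarith [hy.1, hy.2]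
  have hu₂ : ContDiffAt ℝ 2 u ρ :=
    (hu.contDiffAt (Icc_mem_nhds hρ.1 hρ.2)).of_le (WithTop.coe_le_coe.mpr le_top)
  let a : ℝ → ℂ := fun y => -(2 * (lam / 2) * y / (1 - (y:ℂ) ^ 2))
  have hg : ∀ᶠ y in 𝓝 ρ, HasDerivAt (fun x : ℝ => (1 - (x:ℂ) ^ 2) ^ (lam / 2))
      (a y * (1 - (y:ℂ) ^ 2) ^ (lam / 2)) y := by
    filter_upwards [Ioo_mem_nhds hρ.1 hρ.2] with y hy
    exact hasDerivAt_one_sub_sq_cpow _ (hsq y hy)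
  have hu_diff : ∀ᶠ y in 𝓝 ρ, DifferentiableAt ℝ u y :=
    (hu₂.eventually (by simp)).mono fun y hy => hy.differentiableAt (by simp)
  have hu'_diff : DifferentiableAt ℝ (deriv u) ρ :=
    (hu₂.derivWithin (m := 1) (by norm_num)).differentiableAt (by simp)
  rw [(hasDerivAt_deriv_mul_of_hasDerivAt_eq_mul hg
      (hasDerivAt_neg_two_mul_div_one_sub_sq _ (hsq ρ hρ)) hu_diff hu'_diff).deriv,
    (hg.self_of_nhds.mul_of_hasDerivAt_eq_mul hu_diff.self_of_nhds.hasDerivAt).deriv]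
  exact conjugated_mode_equation _ (by exact_mod_cast hρ.1.ne')
    (Complex.slitPlane_ne_zero (one_sub_sq_mem_slitPlane (hsq ρ hρ))) (hode ρ hρ) rfl rfl
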